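/- Let E : B → A be a conditional expectation with Index E = 2 and set U = 2e_A − 1 in C*⟨B, e_A⟩. Then U is a self-adjoint unitary with U² = 1, and U b U* = 2E(b) − b for every b ∈ B. Consequently β = Ad(U)|_B is an automorphism of B of order two with fixed point algebra B^β = A. -/

import Mathlib

/- Watatani-style conditional expectations, quasi-bases, and the C*-basic
construction, formalized abstractly. -/

noncomputable section

/-- A conditional expectation of a unital C*-algebra `B` onto a C*-subalgebra `A`. -/
structure CondExp (B : Type*) [NormedRing B] [StarRing B] [NormedAlgebra ℂ B] [StarModule ℂ B]
    (A : StarSubalgebra ℂ B) where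
  toFun : B →ₗ[ℂ] B
  mem_range : ∀ b, toFun b ∈ A
  fixes : ∀ a ∈ A, toFun a = a
  left_mod : ∀ a ∈ A, ∀ b, toFun (a * b) = a * toFun b
  right_mod : ∀ a ∈ A, ∀ b, toFun (b * a) = toFun b * a
  star_map : ∀ b, toFun (star b) = star (toFun b)
  pos : ∀ b, ∃ c, toFun (star b * b) = star c * c

/-- `x` is a quasi-basis for the conditional expectation `E` (with pairs `(x i, (x i)*)`). -/
def IsQuasiBasis {B : Type*} [NormedRing B] [StarRing B] [NormedAlgebra ℂ B] [StarModule ℂ B]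
    {A : StarSubalgebra ℂ B} (E : CondExp B A) {n : ℕ} (x : Fin n → B) : Prop :=
  (∀ b, ∑ i, x i * E.toFun (star (x i) * b) = b) ∧
  (∀ b, ∑ i, E.toFun (b * x i) * star (x i) = b)

/-- The C*-basic construction `C = C*⟨B, e_A⟩` of a conditional expectation `E : B → A`,
with Jones projection `e`. -/
structure BasicConstruction {B : Type*} [NormedRing B] [StarRing B] [NormedAlgebra ℂ B] [StarModule ℂ B]
    {A : StarSubalgebra ℂ B} (E : CondExp B A)
    (C : Type*) [NormedRing C] [StarRing C] [NormedAlgebra ℂ C] [StarModule ℂ C] where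
  ι : B →⋆ₐ[ℂ] C
  inj : Function.Injective ι
  e : C
  e_star : star e = e
  e_idem : e * e = e
  jones : ∀ b, e * ι b * e = ι (E.toFun b) * e
  dense : (Submodule.span ℂ {y : C | ∃ b c : B, y = ι b * e * ι c}).topologicalClosure = ⊤
  mul_e_inj : ∀ b : B, ι b * e = 0 → b = 0

/-!
Write `f = 1 - e` for the complementary projection. Since `e b e = E(b) e`, the conjugation
formula `(2e - 1) b (2e - 1) = 2E(b) - b` amounts to `f b f = E(b) f`, and, tested against the
dense span of the `b e c`, to `E(u v) = u v` for `u, v ∈ ker E`. Index two gives this: the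
elements `c_i = x_i - E(x_i)` satisfy `∑ c_i c_i* = 1` and `∑ c_i E(c_i* v) = v` on `ker E`,
which turns `E(u* v) - u* v` into the Gram sum `∑ w_i(u)* w_i(v)` with
`w_i(v) = c_i* v - E(c_i* v) ∈ ker E`. On the diagonal this sum `S` is positive, and applying
the same identity to the `w_i(v)` gives `S ≤ E(S) = 0`; hence every `w_i(v)` vanishes.
-/

namespace CondExp

variable {B : Type*} [NormedRing B] [StarRing B] [NormedAlgebra ℂ B] [StarModule ℂ B]
  {A : StarSubalgebra ℂ B} (E : CondExp B A)

lemma toFun_toFun (b : B) : E.toFun (E.toFun b) = E.toFun b :=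
  E.fixes _ (E.mem_range b)

lemma toFun_toFun_mul (b c : B) : E.toFun (E.toFun b * c) = E.toFun b * E.toFun c :=
  E.left_mod _ (E.mem_range b) c

lemma toFun_mul_toFun (b c : B) : E.toFun (b * E.toFun c) = E.toFun b * E.toFun c :=
  E.right_mod _ (E.mem_range c) b

lemma toFun_sub_toFun (b : B) : E.toFun (b - E.toFun b) = 0 := by
  rw [map_sub, toFun_toFun, sub_self]

lemma toFun_eq_self_iff (b : B) : E.toFun b = b ↔ b ∈ A :=
  ⟨fun h => h ▸ E.mem_range b, E.fixes b⟩

lemma toFun_star_of_ker {u : B} (hu : E.toFun u = 0) : E.toFun (star u) = 0 := by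
  rw [E.star_map, hu, star_zero]

section QuasiBasis

variable {E} {n : ℕ} {x : Fin n → B}

lemma sum_compl_mul_toFun_star_compl_mul (hx : IsQuasiBasis E x) {v : B}
    (hv : E.toFun v = 0) :
    ∑ i, (x i - E.toFun (x i)) * E.toFun (star (x i - E.toFun (x i)) * v) = v := by
  have hterm : ∀ i, E.toFun (star (x i - E.toFun (x i)) * v) = E.toFun (star (x i) * v) := by
    intro i
    rw [star_sub, ← E.star_map, sub_mul, map_sub, toFun_toFun_mul, hv, mul_zero, sub_zero]
  simp only [hterm, sub_mul, Finset.sum_sub_distrib, ← toFun_mul_toFun, ← map_sum, hx.1 v, hv,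
    sub_zero]

lemma sum_compl_mul_star_compl (hx : IsQuasiBasis E x) (hidx : ∑ i, x i * star (x i) = 2) :
    ∑ i, (x i - E.toFun (x i)) * star (x i - E.toFun (x i)) = 1 := by
  have hleft : ∑ i, x i * E.toFun (star (x i)) = 1 := by
    simpa only [mul_one] using hx.1 1
  have hright : ∑ i, E.toFun (x i) * star (x i) = 1 := by
    simpa only [one_mul] using hx.2 1
  have hboth : ∑ i, E.toFun (x i) * E.toFun (star (x i)) = 1 := by
    simp only [← toFun_toFun_mul, ← map_sum, hright]
    exact E.fixes 1 A.one_mem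
  simp only [star_sub, ← E.star_map, sub_mul, mul_sub, Finset.sum_sub_distrib, hidx, hleft,
    hright, hboth]
  norm_num

end QuasiBasis

section KernelFrame

variable {E} {ι : Type*} [Fintype ι] {c : ι → B}
  (hc : ∑ i, c i * star (c i) = 1)
  (hcE : ∀ v, E.toFun v = 0 → ∑ i, c i * E.toFun (star (c i) * v) = v)
include hc hcE

lemma sum_star_compl_mul_compl {u v : B} (hu : E.toFun u = 0) (hv : E.toFun v = 0) :
    ∑ i, star (star (c i) * u - E.toFun (star (c i) * u)) *
        (star (c i) * v - E.toFun (star (c i) * v)) =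
      E.toFun (star u * v) - star u * v := by
  have hu' : ∑ i, E.toFun (star u * c i) * star (c i) = star u := by
    simpa only [star_sum, star_mul, star_star, ← E.star_map] using congrArg star (hcE u hu)
  have hterm : ∀ i, star (star (c i) * u - E.toFun (star (c i) * u)) *
      (star (c i) * v - E.toFun (star (c i) * v)) =
      star u * (c i * star (c i)) * v - star u * (c i * E.toFun (star (c i) * v))
        - E.toFun (star u * c i) * star (c i) * v
        + E.toFun (E.toFun (star u * c i) * star (c i) * v) := by
    intro i
    rw [mul_assoc (E.toFun _), toFun_toFun_mul, star_sub, ← E.star_map]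
    simp only [star_mul, star_star]
    noncomm_ring
  simp only [hterm, Finset.sum_add_distrib, Finset.sum_sub_distrib, ← map_sum, ← Finset.mul_sum,
    ← Finset.sum_mul, hc, hcE v hv, hu']
  noncomm_ring

variable [PartialOrder B] [StarOrderedRing B]

lemma star_mul_self_le_toFun {u : B} (hu : E.toFun u = 0) :
    star u * u ≤ E.toFun (star u * u) := by
  rw [← sub_nonneg, ← sum_star_compl_mul_compl hc hcE hu hu]
  exact Finset.sum_nonneg fun i _ => star_mul_self_nonneg _

lemma toFun_star_mul_self_of_ker {u : B} (hu : E.toFun u = 0) :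
    E.toFun (star u * u) = star u * u := by
  have hS := sum_star_compl_mul_compl hc hcE hu hu
  have hle := Finset.sum_le_sum fun i (_ : i ∈ Finset.univ) =>
    star_mul_self_le_toFun hc hcE (E.toFun_sub_toFun (star (c i) * u))
  rw [← map_sum, hS, map_sub, toFun_toFun, sub_self] at hle
  have hnonneg : 0 ≤ E.toFun (star u * u) - star u * u :=
    hS ▸ Finset.sum_nonneg fun i _ => star_mul_self_nonneg _
  exact sub_eq_zero.mp (le_antisymm hle hnonneg)

lemma compl_eq_zero_of_ker [CStarRing B] {v : B} (hv : E.toFun v = 0) (i : ι) :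
    star (c i) * v - E.toFun (star (c i) * v) = 0 := by
  have hS := sum_star_compl_mul_compl hc hcE hv hv
  rw [toFun_star_mul_self_of_ker hc hcE hv, sub_self] at hS
  have hi := (Finset.sum_eq_zero_iff_of_nonneg fun i _ => star_mul_self_nonneg _).mp hS i
    (Finset.mem_univ i)
  exact CStarRing.star_mul_self_eq_zero_iff _ |>.mp hi

lemma toFun_mul_of_ker [CStarRing B] {u v : B} (hu : E.toFun u = 0) (hv : E.toFun v = 0) :
    E.toFun (u * v) = u * v := by
  have hS := sum_star_compl_mul_compl hc hcE (E.toFun_star_of_ker hu) hv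
  simp only [compl_eq_zero_of_ker hc hcE hv, mul_zero, Finset.sum_const_zero, star_star] at hS
  exact (sub_eq_zero.mp hS.symm)

lemma toFun_mul_of_ker_right [CStarRing B] (b : B) {v : B} (hv : E.toFun v = 0) :
    E.toFun (b * v) = (b - E.toFun b) * v := by
  have h := toFun_mul_of_ker hc hcE (E.toFun_sub_toFun b) hv
  rwa [sub_mul, map_sub, toFun_toFun_mul, hv, mul_zero, sub_zero, ← sub_mul] at h

end KernelFrame

lemma toFun_two_mul_toFun_sub (b : B) :
    E.toFun (2 * E.toFun b - b) = E.toFun b := by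
  rw [two_mul, map_sub, map_add, toFun_toFun, add_sub_cancel_right]

lemma two_mul_toFun_sub_eq_self_iff (b : B) : 2 * E.toFun b - b = b ↔ b ∈ A := by
  rw [← toFun_eq_self_iff, sub_eq_iff_eq_add, ← two_mul]
  refine ⟨fun h => smul_right_injective B (two_ne_zero (α := ℂ)) ?_, congrArg (2 * ·)⟩
  simpa only [two_smul, ← two_mul] using h

end CondExp

namespace BasicConstruction

variable {B C : Type*} [NormedRing B] [StarRing B] [NormedAlgebra ℂ B] [StarModule ℂ B]
  [NormedRing C] [StarRing C] [NormedAlgebra ℂ C] [StarModule ℂ C]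
  {A : StarSubalgebra ℂ B} {E : CondExp B A} (bc : BasicConstruction E C)

lemma eq_zero_of_mul_generators {z : C} (h : ∀ c d : B, z * (bc.ι c * bc.e * bc.ι d) = 0) :
    z = 0 := by
  let L : C →L[ℂ] C := ContinuousLinearMap.mul ℂ C z
  have hspan : Submodule.span ℂ {y : C | ∃ b c : B, y = bc.ι b * bc.e * bc.ι c} ≤
      LinearMap.ker (L : C →ₗ[ℂ] C) := by
    rw [Submodule.span_le]
    rintro _ ⟨c, d, rfl⟩
    exact h c d
  have hclosure := Submodule.topologicalClosure_minimal _ hspan L.isClosed_ker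
  rw [bc.dense] at hclosure
  simpa [L] using hclosure (Submodule.mem_top (x := 1))

lemma one_sub_e_mul_generator (c d : B) :
    (1 - bc.e) * (bc.ι c * bc.e * bc.ι d) = bc.ι (c - E.toFun c) * bc.e * bc.ι d := by
  have hj : bc.e * (bc.ι c * bc.e * bc.ι d) = bc.ι (E.toFun c) * bc.e * bc.ι d := by
    rw [← mul_assoc, ← mul_assoc, bc.jones]
  rw [sub_mul, one_mul, hj, map_sub, sub_mul, sub_mul]

lemma one_sub_e_conj (hE : ∀ b v : B, E.toFun v = 0 → E.toFun (b * v) = (b - E.toFun b) * v)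
    (b : B) : (1 - bc.e) * bc.ι b * (1 - bc.e) = bc.ι (E.toFun b) * (1 - bc.e) := by
  rw [← sub_eq_zero]
  refine bc.eq_zero_of_mul_generators fun c d => ?_
  have hv := E.toFun_sub_toFun c
  have hleft : (1 - bc.e) * bc.ι b * (1 - bc.e) * (bc.ι c * bc.e * bc.ι d) =
      bc.ι (E.toFun b * (c - E.toFun c)) * bc.e * bc.ι d := by
    calc (1 - bc.e) * bc.ι b * (1 - bc.e) * (bc.ι c * bc.e * bc.ι d)
        = (1 - bc.e) * (bc.ι b * ((1 - bc.e) * (bc.ι c * bc.e * bc.ι d))) := by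
          simp only [mul_assoc]
      _ = (1 - bc.e) * (bc.ι (b * (c - E.toFun c)) * bc.e * bc.ι d) := by
          rw [bc.one_sub_e_mul_generator, map_mul]
          simp only [mul_assoc]
      _ = bc.ι (E.toFun b * (c - E.toFun c)) * bc.e * bc.ι d := by
          rw [bc.one_sub_e_mul_generator, hE b _ hv, ← sub_mul, sub_sub_cancel]
  have hright : bc.ι (E.toFun b) * (1 - bc.e) * (bc.ι c * bc.e * bc.ι d) =
      bc.ι (E.toFun b * (c - E.toFun c)) * bc.e * bc.ι d := by
    rw [mul_assoc, bc.one_sub_e_mul_generator, map_mul]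
    noncomm_ring
  rw [sub_mul, hleft, hright, sub_self]

lemma two_e_sub_one_conj
    (hE : ∀ b v : B, E.toFun v = 0 → E.toFun (b * v) = (b - E.toFun b) * v) (b : B) :
    (2 * bc.e - 1) * bc.ι b * (2 * bc.e - 1) = bc.ι (2 * E.toFun b - b) :=
  calc (2 * bc.e - 1) * bc.ι b * (2 * bc.e - 1)
      = 2 * (bc.e * bc.ι b * bc.e + (1 - bc.e) * bc.ι b * (1 - bc.e)) - bc.ι b := by
        noncomm_ring
    _ = 2 * (bc.ι (E.toFun b) * bc.e + bc.ι (E.toFun b) * (1 - bc.e)) - bc.ι b := by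
        rw [bc.jones, bc.one_sub_e_conj hE]
    _ = bc.ι (2 * E.toFun b - b) := by
        rw [map_sub, map_mul, map_ofNat]
        noncomm_ring

end BasicConstruction

theorem unitary_two_eA_sub_one_general
    {B C : Type*} [NormedRing B] [StarRing B] [CStarRing B] [NormedAlgebra ℂ B]
    [StarModule ℂ B] [CompleteSpace B]
    [NormedRing C] [StarRing C] [NormedAlgebra ℂ C]
    [StarModule ℂ C]
    {A : StarSubalgebra ℂ B} (E : CondExp B A)
    {n : ℕ} (x : Fin n → B) (hx : IsQuasiBasis E x)
    (hidx : ∑ i, x i * star (x i) = (2 : B))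
    (bc : BasicConstruction E C)
    (U : C) (hU : U = 2 * bc.e - 1) :
    star U = U ∧
    U * U = 1 ∧
    (∀ b : B, U * bc.ι b * star U = bc.ι (2 * E.toFun b - b)) ∧
    -- β(b) = 2E(b) − b maps B into B and has order two
    (∀ b : B, 2 * E.toFun (2 * E.toFun b - b) - (2 * E.toFun b - b) = b) ∧
    -- the fixed point algebra of β is A
    (∀ b : B, 2 * E.toFun b - b = b ↔ b ∈ A) := by
  let _ : CStarAlgebra B := { ‹NormedRing B›, ‹StarRing B›, ‹CompleteSpace B›, ‹CStarRing B›,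
    ‹NormedAlgebra ℂ B›, ‹StarModule ℂ B› with }
  let _ : PartialOrder B := CStarAlgebra.spectralOrder B
  have _ : StarOrderedRing B := CStarAlgebra.spectralOrderedRing B
  have hproj : IsStarProjection bc.e := ⟨bc.e_idem, bc.e_star⟩
  have hself : star U = U := by
    rw [hU, star_sub, star_mul, bc.e_star, star_ofNat, star_one, mul_two, two_mul]
  have hunitary : U ∈ unitary C := hU ▸ hproj.two_mul_sub_one_mem_unitary
  have hE : ∀ b v : B, E.toFun v = 0 → E.toFun (b * v) = (b - E.toFun b) * v :=
    fun b _ hv => CondExp.toFun_mul_of_ker_right (CondExp.sum_compl_mul_star_compl hx hidx)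
      (fun _ => CondExp.sum_compl_mul_toFun_star_compl_mul hx) b hv
  have hsq : U * U = 1 := by simpa only [hself] using Unitary.star_mul_self_of_mem hunitary
  refine ⟨hself, hsq, fun b => ?_, fun b => ?_, E.two_mul_toFun_sub_eq_self_iff⟩
  · rw [hself, hU, bc.two_e_sub_one_conj hE]
  · rw [E.toFun_two_mul_toFun_sub]
    abel

/-- `U = 2e_A − 1` is a self-adjoint unitary with `U² = 1`,
`U b U* = 2E(b) − b`, and `β = Ad(U)|_B` is an order-two automorphism of `B`
with fixed point algebra `A`. -/
theorem unitary_two_eA_sub_one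
    {B C : Type*} [NormedRing B] [StarRing B] [CStarRing B] [NormedAlgebra ℂ B]
    [StarModule ℂ B] [CompleteSpace B]
    [NormedRing C] [StarRing C] [CStarRing C] [NormedAlgebra ℂ C]
    [StarModule ℂ C] [CompleteSpace C]
    {A : StarSubalgebra ℂ B} (E : CondExp B A)
    {n : ℕ} (x : Fin n → B) (hx : IsQuasiBasis E x)
    (hidx : ∑ i, x i * star (x i) = (2 : B))
    (bc : BasicConstruction E C)
    (Et : C →ₗ[ℂ] B)
    (hEt : ∀ b c : B, Et (bc.ι b * bc.e * bc.ι c) = ((2 : ℂ))⁻¹ • (b * c))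
    (U : C) (hU : U = 2 * bc.e - 1) :
    star U = U ∧
    U * U = 1 ∧
    (∀ b : B, U * bc.ι b * star U = bc.ι (2 * E.toFun b - b)) ∧
    -- β(b) = 2E(b) − b maps B into B and has order two
    (∀ b : B, 2 * E.toFun (2 * E.toFun b - b) - (2 * E.toFun b - b) = b) ∧
    -- the fixed point algebra of β is A
    (∀ b : B, 2 * E.toFun b - b = b ↔ b ∈ A) :=
  unitary_two_eA_sub_one_general E x hx hidx bc U hU

end
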